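/- arXiv:1510.02568 — 7 statements merged into one kernel-verified Lean document; each statement's English description precedes it below -/
import Mathlib

section
/- Let G be a finite group and let p, q be distinct primes. If there exists a Sylow p-subgroup P of G such that q divides the order of N_G(P)/(P·C_G(P)), then G contains a subgroup which is a Schmidt (p,q)-group. (In graph terms: every edge of the Sylow graph Γ_s(G) is an edge of the Schmidt graph Γ_Sch(G).) -/
/-- The join of a set of normal subgroups is normal. -/
theorem sSup_normal {G : Type*} [Group G] (S : Set (Subgroup G)) (hS : ∀ N ∈ S, N.Normal) :
    (sSup S).Normal := by
  constructor
  intro n hn g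
  rw [sSup_eq_iSup'] at hn ⊢
  refine Subgroup.iSup_induction (C := fun x => g * x * g⁻¹ ∈ ⨆ N : S, (N : Subgroup G))
    _ hn ?_ ?_ ?_
  · intro N x hx
    exact Subgroup.mem_iSup_of_mem N ((hS N N.2).conj_mem x hx g)
  · simpa using Subgroup.one_mem _
  · intro x y hx hy
    have h : g * (x * y) * g⁻¹ = (g * x * g⁻¹) * (g * y * g⁻¹) := by group
    rw [h]; exact Subgroup.mul_mem _ hx hy

/-- The `p'`-core `O_{p'}(G)`: the largest normal subgroup of `G` of order coprime to `p`,
realized as the join of all normal subgroups of order coprime to `p`. -/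
def pPrimeCore (p : ℕ) (G : Type*) [Group G] : Subgroup G :=
  sSup {N : Subgroup G | N.Normal ∧ Nat.Coprime (Nat.card N) p}

instance pPrimeCore_normal (p : ℕ) (G : Type*) [Group G] : (pPrimeCore p G).Normal :=
  sSup_normal _ fun _ hN => hN.1

/-- The `p`-core `O_p(G)`: the largest normal `p`-subgroup of `G`,
realized as the join of all normal `p`-subgroups. -/
def pCore (p : ℕ) (G : Type*) [Group G] : Subgroup G :=
  sSup {N : Subgroup G | N.Normal ∧ IsPGroup p N}

instance pCore_normal (p : ℕ) (G : Type*) [Group G] : (pCore p G).Normal :=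
  sSup_normal _ fun _ hN => hN.1

/-- `O_{p',p}(G)`: the preimage in `G` of `O_p(G / O_{p'}(G))`. -/
def OpPrimeP (p : ℕ) (G : Type*) [Group G] : Subgroup G :=
  (pCore p (G ⧸ pPrimeCore p G)).comap (QuotientGroup.mk' (pPrimeCore p G))

/-- A Schmidt group: a non-nilpotent group all of whose proper subgroups are nilpotent. -/
def IsSchmidt (G : Type*) [Group G] : Prop :=
  ¬ Group.IsNilpotent G ∧ ∀ H : Subgroup G, H ≠ ⊤ → Group.IsNilpotent H

/-- A Schmidt `(p,q)`-group: a Schmidt group whose order is divisible by exactly the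
primes `p` and `q` and whose Sylow `p`-subgroup is normal. -/
def IsSchmidtPQ (p q : ℕ) (G : Type*) [Group G] : Prop :=
  IsSchmidt G ∧ (Nat.card G).primeFactors = {p, q} ∧ ∃ P : Sylow p G, (P : Subgroup G).Normal

section Aux

variable {A B : Type*} [Group A] [Group B]

/-- Nilpotency transfers along a `MulEquiv`. -/
lemma nilpotent_of_mulEquiv' (e : A ≃* B) (h : Group.IsNilpotent A) :
    Group.IsNilpotent B := by
  haveI := h
  exact nilpotent_of_mulEquiv e

/-- The Schmidt property transfers along a `MulEquiv`. -/
lemma isSchmidt_of_mulEquiv (e : A ≃* B) (h : IsSchmidt A) : IsSchmidt B := by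
  constructor
  · intro hB
    exact h.1 (nilpotent_of_mulEquiv' e.symm hB)
  · intro T hT
    have hT' : T.comap e.toMonoidHom ≠ ⊤ := by
      intro hc
      apply hT
      have := congrArg (Subgroup.map e.toMonoidHom) hc
      rwa [Subgroup.map_comap_eq_self_of_surjective e.surjective,
        Subgroup.map_top_of_surjective _ e.surjective] at this
    have hnil := h.2 _ hT'
    have heq : (T.comap e.toMonoidHom).map e.toMonoidHom = T :=
      Subgroup.map_comap_eq_self_of_surjective e.surjective _
    exact nilpotent_of_mulEquiv'
      ((Subgroup.equivMapOfInjective _ _ e.injective).trans (MulEquiv.subgroupCongr heq)) hnil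

/-- Every non-nilpotent finite group contains a Schmidt subgroup. -/
lemma exists_schmidt_le [Finite A] (K : Subgroup A) (hK : ¬ Group.IsNilpotent K) :
    ∃ H : Subgroup A, H ≤ K ∧ IsSchmidt H := by
  suffices h : ∀ n (K : Subgroup A), Nat.card K = n → ¬ Group.IsNilpotent K →
      ∃ H : Subgroup A, H ≤ K ∧ IsSchmidt H from h _ K rfl hK
  intro n
  induction n using Nat.strong_induction_on with
  | _ n ih =>
    intro K hn hK
    by_cases hall : ∀ S : Subgroup K, S ≠ ⊤ → Group.IsNilpotent S
    · exact ⟨K, le_rfl, hK, hall⟩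
    · push_neg at hall
      obtain ⟨S, hSne, hSnn⟩ := hall
      have e : S ≃* (S.map K.subtype) :=
        Subgroup.equivMapOfInjective S K.subtype Subtype.coe_injective
      have hnn' : ¬ Group.IsNilpotent (S.map K.subtype) := fun hnil =>
        hSnn (nilpotent_of_mulEquiv' e.symm hnil)
      have hcard : Nat.card (S.map K.subtype) = Nat.card S :=
        (Nat.card_congr e.toEquiv).symm
      have hlt : Nat.card (S.map K.subtype) < n := by
        rw [← hn, hcard]
        refine lt_of_le_of_ne (Subgroup.card_le_card_group S) fun hEq => hSne ?_
        exact Subgroup.eq_top_of_card_eq _ hEq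
      obtain ⟨H, hH1, hH2⟩ := ih _ hlt (S.map K.subtype) rfl hnn'
      exact ⟨H, hH1.trans (Subgroup.map_subtype_le S), hH2⟩

/-- If `H` normalizes `P`, then `P ∩ H` is normal in `H`. -/
lemma subgroupOf_normal_of_le_normalizer {P H : Subgroup A} (h : H ≤ Subgroup.normalizer (P : Set A)) :
    (P.subgroupOf H).Normal := by
  constructor
  rintro ⟨n, hn⟩ hnP ⟨g, hg⟩
  simp only [Subgroup.mem_subgroupOf] at hnP ⊢
  have := (Subgroup.mem_normalizer_iff.mp (h hg) n).mp hnP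
  simpa using this

end Aux

/-- Every edge of the Sylow graph is an edge of the Schmidt graph: if `q` divides the order
of `N_G(P)/(P·C_G(P))` for some Sylow `p`-subgroup `P` of `G`, then `G` contains a
Schmidt `(p,q)`-subgroup. -/
theorem sylow_edge_is_schmidt_edge {G : Type*} [Group G] [Finite G] {p q : ℕ}
    (hp : p.Prime) (hq : q.Prime) (hpq : p ≠ q) (P : Sylow p G)
    (h : q ∣ ((P : Subgroup G) ⊔ Subgroup.centralizer ((P : Subgroup G) : Set G)).relIndex
      (Subgroup.normalizer ((P : Subgroup G) : Set G))) :
    ∃ H : Subgroup G, IsSchmidtPQ p q H := by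
  haveI := Fact.mk hp
  haveI := Fact.mk hq
  set N : Subgroup G := Subgroup.normalizer ((P : Subgroup G) : Set G) with hNdef
  set C : Subgroup G := Subgroup.centralizer ((P : Subgroup G) : Set G) with hCdef
  set D : Subgroup N := ((P : Subgroup G) ⊔ C).subgroupOf N with hDdef
  have hqD : q ∣ D.index := h
  -- find a q-element of N outside P ⊔ C
  obtain ⟨Q⟩ : Nonempty (Sylow q N) := Sylow.nonempty
  have hQD : ¬ (Q : Subgroup N) ≤ D := by
    intro hle
    exact Q.not_dvd_index (hqD.trans (Subgroup.index_dvd_of_le hle))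
  obtain ⟨x', hxQ, hxD⟩ := SetLike.not_le_iff_exists.mp hQD
  obtain ⟨k, hk⟩ := IsPGroup.iff_orderOf.mp Q.2 ⟨x', hxQ⟩
  rw [Subgroup.orderOf_mk] at hk
  -- the subgroup K' = P' ⊔ ⟨x'⟩ of N
  set P' : Subgroup N := (P : Subgroup G).subgroupOf N with hP'def
  haveI hP'norm : P'.Normal := Subgroup.normal_in_normalizer
  have hP'p : IsPGroup p P' := P.2.comap_of_injective N.subtype Subtype.coe_injective
  set K' : Subgroup N := P' ⊔ Subgroup.zpowers x' with hK'def
  have hx'K : x' ∈ K' := Subgroup.mem_sup_right (Subgroup.mem_zpowers x')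
  have hP'K : P' ≤ K' := le_sup_left
  set f : N →* N ⧸ P' := QuotientGroup.mk' P' with hfdef
  have hmapK : K'.map f = Subgroup.zpowers (f x') := by
    rw [hK'def, Subgroup.map_sup, f.map_zpowers, (Subgroup.map_eq_bot_iff P').mpr
      (le_of_eq (QuotientGroup.ker_mk' P').symm), bot_sup_eq]
  have hordfx : orderOf (f x') ∣ q ^ k := hk ▸ orderOf_map_dvd f x'
  -- K' is not nilpotent
  have hKnn : ¬ Group.IsNilpotent K' := by
    intro hnilp
    have hsyl := ((isNilpotent_of_finite_tfae (G := K')).out 0 3).mp hnilp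
    obtain ⟨Qk⟩ : Nonempty (Sylow q K') := Sylow.nonempty
    obtain ⟨Pk⟩ : Nonempty (Sylow p K') := Sylow.nonempty
    have hQkn : (Qk : Subgroup K').Normal := hsyl q (Fact.mk hq) Qk
    have hPkn : (Pk : Subgroup K').Normal := hsyl p (Fact.mk hp) Pk
    have hdis : Disjoint (Pk : Subgroup K') (Qk : Subgroup K') :=
      IsPGroup.disjoint_of_ne p q hpq _ _ Pk.2 Qk.2
    -- a p-element or q-element lies in the corresponding normal Sylow subgroup
    have key : ∀ (r : ℕ) (_ : r.Prime) (R : Sylow r K') (_ : (R : Subgroup K').Normal)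
        (y : K') (m : ℕ) (_ : orderOf y = r ^ m), y ∈ (R : Subgroup K') := by
      intro r hr R hRn y m hym
      haveI := Fact.mk hr
      haveI := hRn
      set π := QuotientGroup.mk' (R : Subgroup K') with hπ
      have h2 : orderOf (π y) ∣ r ^ m := hym ▸ orderOf_map_dvd π y
      have h3 : orderOf (π y) ∣ (R : Subgroup K').index := by
        rw [Subgroup.index_eq_card]
        exact orderOf_dvd_natCard _
      have h4 : ¬ r ∣ (R : Subgroup K').index := R.not_dvd_index
      obtain ⟨j, _, hj⟩ := (Nat.dvd_prime_pow hr).mp h2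
      rcases Nat.eq_zero_or_pos j with hj0 | hj0
      · have : π y = 1 := by
          rw [← orderOf_eq_one_iff, hj, hj0, pow_zero]
        rwa [hπ, ← MonoidHom.mem_ker, QuotientGroup.ker_mk'] at this
      · exact absurd (dvd_trans (hj ▸ dvd_pow_self r hj0.ne') h3) h4
    have hx''Qk : (⟨x', hx'K⟩ : K') ∈ (Qk : Subgroup K') := by
      refine key q hq Qk hQkn _ k ?_
      rw [Subgroup.orderOf_mk]; exact hk
    -- x' centralizes P
    have hxC : (x' : G) ∈ C := by
      rw [hCdef]
      refine Subgroup.mem_centralizer_iff.mpr fun g hg => ?_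
      have hgN : g ∈ N := Subgroup.le_normalizer hg
      have hgP' : (⟨g, hgN⟩ : N) ∈ P' := by
        rwa [hP'def, Subgroup.mem_subgroupOf]
      obtain ⟨m, hm⟩ := IsPGroup.iff_orderOf.mp hP'p ⟨⟨g, hgN⟩, hgP'⟩
      rw [Subgroup.orderOf_mk] at hm
      have hg''Pk : (⟨⟨g, hgN⟩, hP'K hgP'⟩ : K') ∈ (Pk : Subgroup K') := by
        refine key p hp Pk hPkn _ m ?_
        rw [Subgroup.orderOf_mk]; exact hm
      have hcomm := Subgroup.commute_of_normal_of_disjoint _ _ hPkn hQkn hdis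
        ⟨⟨g, hgN⟩, hP'K hgP'⟩ ⟨x', hx'K⟩ hg''Pk hx''Qk
      have : ((⟨⟨g, hgN⟩, hP'K hgP'⟩ : K') * ⟨x', hx'K⟩ : K') =
          (⟨x', hx'K⟩ * ⟨⟨g, hgN⟩, hP'K hgP'⟩ : K') := hcomm
      exact congrArg (fun z : K' => ((z : N) : G)) this
    exact hxD (by rw [hDdef, Subgroup.mem_subgroupOf]; exact Subgroup.mem_sup_right hxC)
  -- take a Schmidt subgroup H₀ of K', and push it into G
  obtain ⟨H₀, hH₀K, hH₀S⟩ := exists_schmidt_le K' hKnn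
  set H : Subgroup G := H₀.map N.subtype with hHdef
  have e : H₀ ≃* H := Subgroup.equivMapOfInjective H₀ N.subtype Subtype.coe_injective
  have hHS : IsSchmidt H := isSchmidt_of_mulEquiv e hH₀S
  have hHN : H ≤ N := Subgroup.map_subtype_le H₀
  -- the Sylow p-subgroup of H
  set S : Subgroup H := (P : Subgroup G).subgroupOf H with hSdef
  have hSnorm : S.Normal := subgroupOf_normal_of_le_normalizer hHN
  have hSp : IsPGroup p S := P.2.comap_of_injective H.subtype Subtype.coe_injective
  set g : H →* N ⧸ P' := f.comp (Subgroup.inclusion hHN) with hgdef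
  have hker : g.ker = S := by
    ext ⟨a, ha⟩
    simp only [hgdef, MonoidHom.mem_ker, MonoidHom.comp_apply, hfdef,
      QuotientGroup.mk'_apply, QuotientGroup.eq_one_iff, hSdef, Subgroup.mem_subgroupOf,
      hP'def]
    rfl
  have hrange : ∀ y : H, g y ∈ Subgroup.zpowers (f x') := by
    intro y
    obtain ⟨z, hz, hzy⟩ := y.2
    have : Subgroup.inclusion hHN y = z := by
      ext; exact hzy.symm
    rw [hgdef, MonoidHom.comp_apply, this]
    exact hmapK ▸ Subgroup.mem_map_of_mem f (hH₀K hz)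
  have hidx : S.index ∣ q ^ k := by
    have h1 : Nat.card (H ⧸ g.ker) = Nat.card g.range :=
      Nat.card_congr (QuotientGroup.quotientKerEquivRange g).toEquiv
    rw [← hker, Subgroup.index_eq_card, h1]
    have h2 : g.range ≤ Subgroup.zpowers (f x') := by
      rintro _ ⟨y, rfl⟩; exact hrange y
    exact (Subgroup.card_dvd_of_le h2).trans (by rw [Nat.card_zpowers]; exact hordfx)
  have hpidx : ¬ p ∣ S.index := fun hd =>
    hpq ((Nat.prime_dvd_prime_iff_eq hp hq).mp (hp.dvd_of_dvd_pow (hd.trans hidx)))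
  -- S is a Sylow p-subgroup of H
  have hmax : ∀ T : Subgroup H, IsPGroup p T → S ≤ T → T ≤ S := by
    intro T hT hST
    have h1 : S.relIndex T ∣ S.index := Dvd.intro _ (Subgroup.relIndex_mul_index hST)
    have h2 : S.relIndex T ∣ Nat.card T := Subgroup.index_dvd_card (S.subgroupOf T)
    obtain ⟨n, hn⟩ := hT.exists_card_eq
    rw [hn] at h2
    obtain ⟨j, _, hj⟩ := (Nat.dvd_prime_pow hp).mp h2
    rcases Nat.eq_zero_or_pos j with hj0 | hj0
    · exact Subgroup.relIndex_eq_one.mp (by rw [hj, hj0, pow_zero])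
    · exact absurd (dvd_trans (hj ▸ dvd_pow_self p hj0.ne') h1) hpidx
  refine ⟨H, hHS, ?_, ⟨⟨S, hSp, fun {T} hT hST => le_antisymm (hmax T hT hST) hST⟩, hSnorm⟩⟩
  -- prime factors of |H|
  obtain ⟨m, hm⟩ := hSp.exists_card_eq
  have hcardH : S.index * Nat.card S = Nat.card H := Subgroup.index_mul_card S
  have hdvd : Nat.card H ∣ q ^ k * p ^ m := by
    rw [← hcardH, ← hm]
    exact mul_dvd_mul hidx dvd_rfl
  have hpH : p ∣ Nat.card H := by
    by_contra hpH
    have hcop : (Nat.card H).Coprime (p ^ m) :=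
      Nat.Coprime.pow_right _ (Nat.coprime_comm.mp (hp.coprime_iff_not_dvd.mpr hpH))
    have := hcop.dvd_of_dvd_mul_right hdvd
    obtain ⟨j, _, hj⟩ := (Nat.dvd_prime_pow hq).mp this
    exact hHS.1 (IsPGroup.isNilpotent (IsPGroup.iff_card.mpr ⟨j, hj⟩))
  have hqH : q ∣ Nat.card H := by
    by_contra hqH
    have hcop : (Nat.card H).Coprime (q ^ k) :=
      Nat.Coprime.pow_right _ (Nat.coprime_comm.mp (hq.coprime_iff_not_dvd.mpr hqH))
    have := hcop.dvd_of_dvd_mul_left hdvd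
    obtain ⟨j, _, hj⟩ := (Nat.dvd_prime_pow hp).mp this
    exact hHS.1 (IsPGroup.isNilpotent (IsPGroup.iff_card.mpr ⟨j, hj⟩))
  have hcard0 : Nat.card H ≠ 0 := Nat.card_pos.ne'
  ext r
  simp only [Nat.mem_primeFactors, Finset.mem_insert, Finset.mem_singleton]
  constructor
  · rintro ⟨hr, hrd, -⟩
    rcases (Nat.Prime.dvd_mul hr).mp (hrd.trans hdvd) with h' | h'
    · exact Or.inr ((Nat.prime_dvd_prime_iff_eq hr hq).mp (hr.dvd_of_dvd_pow h'))
    · exact Or.inl ((Nat.prime_dvd_prime_iff_eq hr hp).mp (hr.dvd_of_dvd_pow h'))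
  · rintro (rfl | rfl)
    · exact ⟨hp, hpH, hcard0⟩
    · exact ⟨hq, hqH, hcard0⟩
end

section
/- Let G be a finite group and let p, q be distinct primes. If G contains a subgroup which is a Schmidt (p,q)-group, then q divides the order of G/O_{p',p}(G). (In graph terms: every edge of the Schmidt graph Γ_Sch(G) is an edge of the Hawkes graph Γ_H(G).) -/
/-!
If `q ∤ |G : O_{p',p}(G)|`, every `q`-subgroup of `G` lies in `O_{p',p}(G)`, and since
`O_{p',p}(G) / O_{p'}(G)` is a `p`-group it even lies in `O_{p'}(G)`. So a Sylow `q`-subgroup `Q` of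
a Schmidt `(p,q)`-subgroup `H` is contained in `O_{p'}(G) ∩ H`, a normal subgroup of `H` of
`p'`-order, i.e. a normal `q`-subgroup of `H`; hence `Q = O_{p'}(G) ∩ H` is normal. Then both
Sylow subgroups of `H` are normal and `H` is nilpotent, a contradiction.
-/

open Subgroup

theorem SupClosed.sSup_self_mem {α : Type*} [CompleteLattice α] [Finite α] {s : Set α}
    (hs : SupClosed s) (hbot : ⊥ ∈ s) : sSup s ∈ s :=
  hs.sSup_mem (Set.toFinite s) hbot subset_rfl

section Cores

variable {G : Type*} [Group G]

instance Subgroup.finite_of_finite [Finite G] : Finite (Subgroup G) :=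
  Finite.of_injective _ SetLike.coe_injective

theorem Subgroup.card_sup_dvd_card_mul_card (H K : Subgroup G) [K.Normal] :
    Nat.card ↥(H ⊔ K) ∣ Nat.card H * Nat.card K := by
  have hK : Nat.card ↥(K.subgroupOf (H ⊔ K)) = Nat.card K :=
    Nat.card_congr (subgroupOfEquivOfLe le_sup_right).toEquiv
  calc Nat.card ↥(H ⊔ K) = Nat.card K * K.relIndex H := by
        rw [← card_mul_index (K.subgroupOf (H ⊔ K)), hK, ← relIndex_sup_right]; rfl
    _ ∣ Nat.card K * Nat.card H := mul_dvd_mul_left _ (relIndex_dvd_card K H)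
    _ = Nat.card H * Nat.card K := mul_comm _ _

theorem Subgroup.card_subgroupOf_dvd_card (H K : Subgroup G) :
    Nat.card (H.subgroupOf K) ∣ Nat.card H := by
  rw [← card_map_of_injective K.subtype_injective, subgroupOf_map_subtype]
  exact card_dvd_of_le inf_le_left

theorem supClosed_normal_coprime_card (p : ℕ) :
    SupClosed {N : Subgroup G | N.Normal ∧ (Nat.card N).Coprime p} := by
  rintro A ⟨hA, hAp⟩ B ⟨hB, hBp⟩
  exact ⟨sup_normal A B, (hAp.mul_left hBp).coprime_dvd_left (card_sup_dvd_card_mul_card A B)⟩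

theorem supClosed_normal_isPGroup (p : ℕ) :
    SupClosed {N : Subgroup G | N.Normal ∧ IsPGroup p N} := by
  rintro A ⟨hA, hAp⟩ B ⟨hB, hBp⟩
  exact ⟨sup_normal A B, hAp.to_sup_of_normal_right hBp⟩

theorem coprime_card_pPrimeCore [Finite G] (p : ℕ) : (Nat.card (pPrimeCore p G)).Coprime p :=
  ((supClosed_normal_coprime_card p).sSup_self_mem ⟨normal_bot, by simp⟩).2

theorem isPGroup_pCore [Finite G] (p : ℕ) : IsPGroup p (pCore p G) :=
  ((supClosed_normal_isPGroup p).sSup_self_mem ⟨normal_bot, .of_bot⟩).2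

instance OpPrimeP_normal (p : ℕ) : (OpPrimeP p G).Normal :=
  normal_comap _

theorem IsPGroup.le_of_not_dvd_index {q : ℕ} [Fact q.Prime] {Q K : Subgroup G} [K.Normal]
    (hQ : IsPGroup q Q) (hK : ¬ q ∣ K.index) : Q ≤ K := by
  have : K.FiniteIndex := ⟨fun h => hK (h ▸ dvd_zero q)⟩
  rw [← QuotientGroup.ker_mk' K, ← Subgroup.map_eq_bot_iff, ← card_eq_one]
  refine (hQ.map (QuotientGroup.mk' K)).card_eq_or_dvd.resolve_right fun h => hK ?_
  rw [index_eq_card]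
  exact h.trans (card_subgroup_dvd_card _)

theorem IsPGroup.le_pPrimeCore_of_le_OpPrimeP [Finite G] {p q : ℕ} [Fact p.Prime]
    [Fact q.Prime] (hpq : p ≠ q) {Q : Subgroup G} (hQ : IsPGroup q Q)
    (hQK : Q ≤ OpPrimeP p G) : Q ≤ pPrimeCore p G := by
  rw [← QuotientGroup.ker_mk' (pPrimeCore p G), ← Subgroup.map_eq_bot_iff]
  exact (IsPGroup.disjoint_of_ne q p hpq.symm _ _ (hQ.map _) (isPGroup_pCore p)).eq_bot_of_le
    (map_le_iff_le_comap.mpr hQK)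

end Cores

section Sylow

variable {H : Type*} [Group H]

theorem IsPGroup.of_coprime_card_of_primeFactors_subset [Finite H] {p q : ℕ} (hq : q.Prime)
    (hH : (Nat.card H).primeFactors ⊆ {p, q}) (hp : (Nat.card H).Coprime p) :
    IsPGroup q H := by
  rw [isPGroup_iff_primeFactors_card_subset hq.ne_zero, hq.primeFactors]
  intro r hr
  rcases Finset.mem_insert.mp (hH hr) with rfl | hrq
  · exact absurd (Nat.dvd_of_mem_primeFactors hr)
      ((Nat.prime_of_mem_primeFactors hr).coprime_iff_not_dvd.mp hp.symm)
  · exact hrq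

theorem Sylow.normal_of_not_dvd_card {r : ℕ} [Fact r.Prime] (R : Sylow r H)
    (hr : ¬ r ∣ Nat.card H) : (R : Subgroup H).Normal := by
  have hR : (R : Subgroup H) = ⊥ := card_eq_one.mp <| R.isPGroup'.card_eq_or_dvd.resolve_right
    fun h => hr (h.trans (card_subgroup_dvd_card _))
  rw [hR]
  exact normal_bot

theorem Sylow.normal_of_normal [Finite H] {r : ℕ} [Fact r.Prime] (P R : Sylow r H)
    [hP : (P : Subgroup H).Normal] : (R : Subgroup H).Normal := by
  have := Sylow.unique_of_normal P hP
  exact Subsingleton.elim P R ▸ hP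

theorem Group.isNilpotent_of_primeFactors_subset_pair [Finite H] {p q : ℕ}
    (hH : (Nat.card H).primeFactors ⊆ {p, q}) (P : Sylow p H) [(P : Subgroup H).Normal]
    (Q : Sylow q H) [(Q : Subgroup H).Normal] : Group.IsNilpotent H := by
  refine (isNilpotent_of_finite_tfae.out 0 3).mpr ?_
  intro r _ R
  by_cases hr : r ∣ Nat.card H
  · obtain rfl | rfl : r = p ∨ r = q := by
      simpa using hH (Nat.mem_primeFactors.mpr ⟨Fact.out, hr, Nat.card_pos.ne'⟩)
    · exact P.normal_of_normal R
    · exact Q.normal_of_normal R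
  · exact R.normal_of_not_dvd_card hr

end Sylow

/-- Every edge of the Schmidt graph is an edge of the Hawkes graph: if `G` contains a
Schmidt `(p,q)`-subgroup then `q` divides `|G / O_{p',p}(G)|`. -/
theorem schmidt_edge_is_hawkes_edge {G : Type*} [Group G] [Finite G] {p q : ℕ}
    (hp : p.Prime) (hq : q.Prime) (hpq : p ≠ q)
    (h : ∃ H : Subgroup G, IsSchmidtPQ p q H) :
    q ∣ Nat.card (G ⧸ OpPrimeP p G) := by
  obtain ⟨H, ⟨hNotNilpotent, -⟩, hH, P, hP⟩ := h
  have := Fact.mk hp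
  have := Fact.mk hq
  by_contra hqK
  rw [← index_eq_card] at hqK
  let Q : Sylow q H := default
  let M := (pPrimeCore p G).subgroupOf H
  have hQG : IsPGroup q (Q.map H.subtype) := Q.isPGroup'.map _
  have hQM : (Q : Subgroup H) ≤ M :=
    map_le_iff_le_comap.mp <| hQG.le_pPrimeCore_of_le_OpPrimeP hpq (hQG.le_of_not_dvd_index hqK)
  have hM : IsPGroup q M :=
    .of_coprime_card_of_primeFactors_subset hq
      ((Nat.primeFactors_mono (card_subgroup_dvd_card M) Nat.card_pos.ne').trans hH.subset)
      ((coprime_card_pPrimeCore p).coprime_dvd_left (card_subgroupOf_dvd_card _ _))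
  have hQ : (Q : Subgroup H).Normal :=
    le_antisymm hQM (hM.le_sylow_of_normal Q) ▸ normal_subgroupOf
  exact hNotNilpotent (Group.isNilpotent_of_primeFactors_subset_pair hH.subset P Q)
end

section
/- Let G be a finite group and let p, q be distinct primes. Then G contains a subgroup which is a Schmidt (p,q)-group if and only if there exists a p-subgroup P of G such that q divides the order of N_G(P)/C_G(P). -/
/-! A `q`-subgroup of `N_G(P)` fails to lie in `C_G(P)` exactly when `q` divides
`|N_G(P) : C_G(P)|`, so both sides amount to a `p`-subgroup `P` normalised but not centralised by
a `q`-subgroup `Q`. In a Schmidt `(p,q)`-group a Sylow `q`-subgroup cannot centralise the normal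
Sylow `p`-subgroup, for then every Sylow subgroup would be normal. Conversely `QP` is not
nilpotent, since in a nilpotent group `p`- and `q`-elements commute, and `P` is normal in `QP` of
`q`-power index; a minimal non-nilpotent subgroup `S` of `QP` is then a Schmidt group whose only
prime divisors are `p` and `q`, with normal Sylow `p`-subgroup `P ∩ S`. -/

section

open Subgroup

variable {G : Type*} [Group G]

theorem Sylow.normal_of_normal_s2 [Finite G] {p : ℕ} [Fact p.Prime] {P : Sylow p G}
    (hP : (P : Subgroup G).Normal) (Q : Sylow p G) : (Q : Subgroup G).Normal := by
  have := Sylow.unique_of_normal P hP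
  rwa [Subsingleton.elim Q P]

theorem primeFactors_card_eq_pair_of_not_isNilpotent [Finite G] {p q : ℕ} [Fact p.Prime]
    [Fact q.Prime] (hG : ¬ Group.IsNilpotent G) (h : (Nat.card G).primeFactors ⊆ {p, q}) :
    (Nat.card G).primeFactors = {p, q} := by
  have mem_of_subset : ∀ {r s : ℕ} [Fact s.Prime], (Nat.card G).primeFactors ⊆ {r, s} →
      r ∈ (Nat.card G).primeFactors := by
    intro r s _ hrs
    by_contra hr
    refine hG (IsPGroup.of_card (Nat.eq_prime_pow_of_unique_prime_dvd (p := s)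
      Nat.card_pos.ne' fun hd hdG => ?_)).isNilpotent
    have hd' := hrs (Nat.mem_primeFactors.mpr ⟨hd, hdG, Nat.card_pos.ne'⟩)
    simp only [Finset.mem_insert, Finset.mem_singleton] at hd'
    rcases hd' with rfl | rfl
    · exact absurd (Nat.mem_primeFactors.mpr ⟨hd, hdG, Nat.card_pos.ne'⟩) hr
    · rfl
  refine h.antisymm ?_
  rw [Finset.insert_subset_iff, Finset.singleton_subset_iff]
  exact ⟨mem_of_subset h, mem_of_subset (Finset.pair_comm p q ▸ h)⟩

theorem exists_isSchmidt_le [Finite G] {K : Subgroup G} (hK : ¬ Group.IsNilpotent K) :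
    ∃ S ≤ K, IsSchmidt S := by
  obtain ⟨S, hSK, hS⟩ :=
    exists_minimal_le_of_wellFoundedLT (fun S : Subgroup G => ¬ Group.IsNilpotent S) K hK
  refine ⟨S, hSK, hS.prop, fun T hT => ?_⟩
  have hTS : T.map S.subtype < S := by
    have := map_subtype_lt_map_subtype.mpr (lt_top_iff_ne_top.mpr hT)
    rwa [← MonoidHom.range_eq_map, range_subtype] at this
  have := not_not.mp (hS.not_prop_of_lt hTS)
  exact Group.nilpotent_of_mulEquiv (T.equivMapOfInjective _ S.subtype_injective).symm

theorem Group.IsNilpotent.le_centralizer_of_isPGroup [Finite G] [Group.IsNilpotent G] {p q : ℕ}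
    [Fact p.Prime] [Fact q.Prime] (hpq : p ≠ q) {A B : Subgroup G} (hA : IsPGroup p A)
    (hB : IsPGroup q B) : A ≤ centralizer B := by
  obtain ⟨P, hAP⟩ := hA.exists_le_sylow
  obtain ⟨Q, hBQ⟩ := hB.exists_le_sylow
  have sylow_normal := (Group.isNilpotent_of_finite_tfae (G := G)).out 0 3 |>.mp ‹_›
  have hPQ := IsPGroup.disjoint_of_ne q p hpq.symm (Q : Subgroup G) P Q.isPGroup' P.isPGroup'
  intro a ha
  rw [mem_centralizer_iff]
  intro b hb
  exact commute_of_normal_of_disjoint Q P (sylow_normal q ‹_› Q) (sylow_normal p ‹_› P) hPQ b a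
    (hBQ hb) (hAP ha)

theorem Subgroup.eq_top_of_sylow_le [Finite G] {p q : ℕ} [Fact p.Prime] [Fact q.Prime]
    (hG : (Nat.card G).primeFactors ⊆ {p, q}) {K : Subgroup G} (P : Sylow p G) (Q : Sylow q G)
    (hP : (P : Subgroup G) ≤ K) (hQ : (Q : Subgroup G) ≤ K) : K = ⊤ := by
  rw [← index_eq_one]
  by_contra hK
  obtain ⟨r, hr, hrK⟩ := Nat.exists_prime_and_dvd hK
  have hr' := hG (Nat.mem_primeFactors.mpr ⟨hr, hrK.trans K.index_dvd_card, Nat.card_pos.ne'⟩)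
  simp only [Finset.mem_insert, Finset.mem_singleton] at hr'
  rcases hr' with rfl | rfl
  · exact P.not_dvd_index (hrK.trans (index_dvd_of_le hP))
  · exact Q.not_dvd_index (hrK.trans (index_dvd_of_le hQ))

theorem IsSchmidtPQ.not_le_centralizer [Finite G] {p q : ℕ} [Fact p.Prime] [Fact q.Prime]
    (hG : IsSchmidtPQ p q G) (P : Sylow p G) (Q : Sylow q G) :
    ¬ (Q : Subgroup G) ≤ centralizer P := by
  obtain ⟨⟨hG, -⟩, hpq, P₀, hP₀⟩ := hG
  intro hQP
  have hQ : (Q : Subgroup G).Normal := by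
    rw [← normalizer_eq_top_iff]
    refine eq_top_of_sylow_le hpq.le P Q ?_ le_normalizer
    exact (le_centralizer_iff.mp hQP).trans (centralizer_le_normalizer _)
  refine hG <| (Group.isNilpotent_of_finite_tfae (G := G)).out 3 0 |>.mp fun r hr R => ?_
  by_cases hrG : r ∈ (Nat.card G).primeFactors
  · rw [hpq, Finset.mem_insert, Finset.mem_singleton] at hrG
    rcases hrG with rfl | rfl
    · exact Sylow.normal_of_normal_s2 hP₀ R
    · exact Sylow.normal_of_normal_s2 hQ R
  · have := hr
    have hR : Nat.card R = 1 := by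
      refine R.isPGroup'.card_eq_or_dvd.resolve_right fun hrR => hrG ?_
      exact Nat.mem_primeFactors.mpr ⟨hr.out, hrR.trans (card_subgroup_dvd_card _),
        Nat.card_pos.ne'⟩
    rw [card_eq_one.mp hR]
    infer_instance

theorem IsSchmidtPQ.exists_le_normalizer_not_le_centralizer [Finite G] {p q : ℕ} [Fact p.Prime]
    [Fact q.Prime] {H : Subgroup G} (hH : IsSchmidtPQ p q H) :
    ∃ P : Subgroup G, IsPGroup p P ∧
      ∃ Q ≤ normalizer (P : Set G), IsPGroup q Q ∧ ¬ Q ≤ centralizer (P : Set G) := by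
  obtain ⟨P, hP⟩ := hH.2.2
  obtain ⟨Q⟩ := Sylow.nonempty (p := q) (G := H)
  refine ⟨P.map H.subtype, P.isPGroup'.map _, Q.map H.subtype, ?_, Q.isPGroup'.map _, ?_⟩
  · exact (map_mono (le_top.trans (normalizer_eq_top (H := (P : Subgroup H))).ge)).trans
      (le_normalizer_map H.subtype)
  · intro hQP
    refine hH.not_le_centralizer P Q fun x hx => mem_centralizer_iff.mpr fun y hy => ?_
    exact H.subtype_injective (mem_centralizer_iff.mp (hQP ⟨x, hx, rfl⟩) _ ⟨y, hy, rfl⟩)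

theorem Subgroup.relIndex_sup_right_of_le_normalizer {H N : Subgroup G}
    (hH : H ≤ normalizer N) : N.relIndex (H ⊔ N) = N.relIndex H := by
  let := normal_subgroupOf_of_le_normalizer hH
  let := normal_subgroupOf_sup_of_le_normalizer hH
  exact Nat.card_congr (QuotientGroup.quotientInfEquivProdNormalizerQuotient H N hH).toEquiv.symm

theorem Subgroup.relIndex_dvd_card_of_le_sup {P Q S : Subgroup G} (hQ : Q ≤ normalizer P)
    (hS : S ≤ Q ⊔ P) : P.relIndex S ∣ Nat.card Q := by
  have hQP : Q ⊔ P ≤ normalizer P := sup_le hQ le_normalizer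
  calc P.relIndex S = P.relIndex (S ⊔ P) :=
        (relIndex_sup_right_of_le_normalizer (hS.trans hQP)).symm
    _ ∣ P.relIndex (Q ⊔ P) :=
        Dvd.intro _ (relIndex_mul_relIndex _ _ _ le_sup_right (sup_le hS le_sup_right))
    _ = P.relIndex Q := relIndex_sup_right_of_le_normalizer hQ
    _ ∣ Nat.card Q := relIndex_dvd_card P Q

theorem exists_isSchmidtPQ_of_not_le_centralizer [Finite G] {p q : ℕ} [Fact p.Prime]
    [Fact q.Prime] (hpq : p ≠ q) {P Q : Subgroup G} (hP : IsPGroup p P) (hQ : IsPGroup q Q)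
    (hQN : Q ≤ normalizer P) (hQC : ¬ Q ≤ centralizer P) :
    ∃ H : Subgroup G, IsSchmidtPQ p q H := by
  set K := Q ⊔ P
  have hK : ¬ Group.IsNilpotent K := by
    intro hK
    have hQP := hK.le_centralizer_of_isPGroup hpq.symm (hQ.comap_subtype (K := K))
      (hP.comap_subtype (K := K))
    refine hQC fun x hx => mem_centralizer_iff.mpr fun y hy => ?_
    exact congrArg Subtype.val <|
      mem_centralizer_iff.mp (hQP (x := ⟨x, le_sup_left (b := P) hx⟩) hx)
        ⟨y, le_sup_right (a := Q) hy⟩ hy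
  obtain ⟨S, hSK, hS⟩ := exists_isSchmidt_le hK
  have hPS : IsPGroup p (P.subgroupOf S) := hP.comap_subtype
  obtain ⟨a, ha⟩ := hPS.exists_card_eq
  obtain ⟨b, hb⟩ := hQ.exists_card_eq
  have hindex : (P.subgroupOf S).index ∣ q ^ b := hb ▸ relIndex_dvd_card_of_le_sup hQN hSK
  have hp_not_dvd : ¬ p ∣ (P.subgroupOf S).index := fun hpi =>
    hpq ((Nat.prime_dvd_prime_iff_eq Fact.out Fact.out).mp
      ((Nat.Prime.dvd_of_dvd_pow Fact.out (hpi.trans hindex))))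
  have hprimes : (Nat.card S).primeFactors ⊆ {p, q} := by
    intro r hr
    obtain ⟨hr, hrS, -⟩ := Nat.mem_primeFactors.mp hr
    rw [← (P.subgroupOf S).card_mul_index, ha] at hrS
    rw [Finset.mem_insert, Finset.mem_singleton]
    rcases hr.dvd_mul.mp hrS with hrp | hrq
    · exact Or.inl ((Nat.prime_dvd_prime_iff_eq hr Fact.out).mp (hr.dvd_of_dvd_pow hrp))
    · exact Or.inr ((Nat.prime_dvd_prime_iff_eq hr Fact.out).mp
        (hr.dvd_of_dvd_pow (hrq.trans hindex)))
  exact ⟨S, hS, primeFactors_card_eq_pair_of_not_isNilpotent hS.1 hprimes,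
    hPS.toSylow hp_not_dvd,
    normal_subgroupOf_of_le_normalizer (hSK.trans (sup_le hQN le_normalizer))⟩

theorem Subgroup.dvd_relIndex_iff_exists_isPGroup_not_le [Finite G] {q : ℕ} [Fact q.Prime]
    {H K : Subgroup G} [(H.subgroupOf K).Normal] :
    q ∣ H.relIndex K ↔ ∃ Q ≤ K, IsPGroup q Q ∧ ¬ Q ≤ H := by
  constructor
  · intro hq
    obtain ⟨Q⟩ := Sylow.nonempty (p := q) (G := K)
    refine ⟨Q.map K.subtype, map_subtype_le _, Q.isPGroup'.map _, fun hQH => ?_⟩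
    exact Q.not_dvd_index (hq.trans (index_dvd_of_le (map_le_iff_le_comap.mp hQH)))
  · rintro ⟨Q, hQK, hQ, hQH⟩
    let π := QuotientGroup.mk' (H.subgroupOf K)
    have hQπ : (Q.subgroupOf K).map π ≠ ⊥ := by
      rw [Ne, map_eq_bot_iff, QuotientGroup.ker_mk']
      exact fun h => hQH fun x hx => h (x := ⟨x, hQK hx⟩) hx
    have hcard := (hQ.comap_subtype (K := K)).map π |>.card_eq_or_dvd
    rw [card_eq_one] at hcard
    exact (hcard.resolve_left hQπ).trans (card_subgroup_dvd_card _)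

end

/-- `G` contains a Schmidt `(p,q)`-subgroup iff there is a `p`-subgroup `P` of `G` such that
`q` divides the order of `N_G(P)/C_G(P)`. -/
theorem schmidt_subgroup_iff_pSubgroup_aut {G : Type*} [Group G] [Finite G] {p q : ℕ}
    (hp : p.Prime) (hq : q.Prime) (hpq : p ≠ q) :
    (∃ H : Subgroup G, IsSchmidtPQ p q H) ↔
      ∃ P : Subgroup G, IsPGroup p P ∧
        q ∣ (Subgroup.centralizer (P : Set G)).relIndex (Subgroup.normalizer (P : Set G)) := by
  have := Fact.mk hp
  have := Fact.mk hq
  simp_rw [Subgroup.dvd_relIndex_iff_exists_isPGroup_not_le]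
  constructor
  · rintro ⟨H, hH⟩
    exact hH.exists_le_normalizer_not_le_centralizer
  · rintro ⟨P, hP, Q, hQN, hQ, hQC⟩
    exact exists_isSchmidtPQ_of_not_le_centralizer hpq hP hQ hQN hQC
end

section
/- Let G be a finite group, N a normal subgroup of G, and p, q distinct primes. If the quotient G/N contains a subgroup which is a Schmidt (p,q)-group, then G contains a subgroup which is a Schmidt (p,q)-group. (The Schmidt graph function is Q-closed: Γ_Sch(G/N) ⊆ Γ_Sch(G).) -/
section

open Subgroup

variable {p q : ℕ}

theorem QuotientGroup.map_mk'_eq_top_iff {G : Type*} [Group G] (N : Subgroup G) [N.Normal]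
    (X : Subgroup G) : X.map (QuotientGroup.mk' N) = ⊤ ↔ X ⊔ N = ⊤ := by
  rw [← (comap_injective (QuotientGroup.mk'_surjective N)).eq_iff, comap_map_eq,
    QuotientGroup.ker_mk', comap_top]

theorem Sylow.map_eq_top_of_isPGroup {G G' : Type*} [Group G] [Group G'] [Finite G]
    [Fact p.Prime] {f : G →* G'} (hf : Function.Surjective f) (hG' : IsPGroup p G')
    (P : Sylow p G) : (P : Subgroup G).map f = ⊤ :=
  ((P.mapSurjective hf).is_maximal' (hG'.to_subgroup ⊤) le_top).symm

theorem Sylow.isPGroup_quotient_of_primeFactors_card_eq {G : Type*} [Group G] [Finite G]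
    [Fact p.Prime] (hG : (Nat.card G).primeFactors = {p, q}) (P : Sylow p G)
    [(P : Subgroup G).Normal] : IsPGroup q (G ⧸ (P : Subgroup G)) := by
  refine IsPGroup.of_card (Nat.eq_prime_pow_of_unique_prime_dvd
    (P : Subgroup G).index_ne_zero_of_finite fun {r} hr hrP => ?_)
  have hr : r ∈ (Nat.card G).primeFactors :=
    Nat.mem_primeFactors.mpr ⟨hr, hrP.trans (P : Subgroup G).index_dvd_card, Nat.card_pos.ne'⟩
  rw [hG, Finset.mem_insert, Finset.mem_singleton] at hr
  exact hr.resolve_left fun hrp => P.not_dvd_index (hrp ▸ hrP)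

theorem Sylow.map_eq_of_normal {K H : Type*} [Group K] [Group H] [Finite K] [Fact p.Prime]
    {f : K →* H} (hf : Function.Surjective f) (Pk : Sylow p K) (P : Sylow p H)
    [(P : Subgroup H).Normal] : (Pk : Subgroup K).map f = P :=
  have : Finite H := Finite.of_surjective f hf
  have := Sylow.unique_of_normal P ‹_›
  congrArg Sylow.toSubgroup (Subsingleton.elim (Pk.mapSurjective hf) P)

theorem Sylow.map_normalizer_sup_eq_top {K H : Type*} [Group K] [Group H] [Finite K]
    [Fact p.Prime] {f : K →* H} (hf : Function.Surjective f) (Pk : Sylow p K) (P : Sylow p H)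
    [(P : Subgroup H).Normal] : (normalizer ((Pk : Subgroup K) : Set K)).map f ⊔ P = ⊤ := by
  have hfrattini : normalizer ((Pk : Subgroup K) : Set K) ⊔ (P : Subgroup H).comap f = ⊤ :=
    Sylow.normalizer_sup_eq_top' Pk (map_le_iff_le_comap.mp (Pk.map_eq_of_normal hf P).le)
  rw [← map_comap_eq_self_of_surjective hf P, ← Subgroup.map_sup, hfrattini,
    map_top_of_surjective f hf]

theorem IsSchmidt.of_mulEquiv {A B : Type*} [Group A] [Group B] (e : A ≃* B)
    (h : IsSchmidt A) : IsSchmidt B := by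
  refine ⟨fun hB => h.1 (Group.nilpotent_of_mulEquiv e.symm), fun T hT => ?_⟩
  have hmap : (T.comap (e : A →* B)).map (e : A →* B) = T :=
    map_comap_eq_self_of_surjective e.surjective T
  have hT' : T.comap (e : A →* B) ≠ ⊤ := by
    intro htop
    apply hT
    rw [← hmap, htop, map_top_of_surjective _ e.surjective]
  have := h.2 _ hT'
  exact Group.nilpotent_of_mulEquiv ((e.subgroupMap _).trans (MulEquiv.subgroupCongr hmap))

theorem IsSchmidtPQ.of_mulEquiv {A B : Type*} [Group A] [Group B] [Finite A] [Fact p.Prime]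
    (e : A ≃* B) (h : IsSchmidtPQ p q A) : IsSchmidtPQ p q B := by
  obtain ⟨hA, hcard, P, hP⟩ := h
  exact ⟨hA.of_mulEquiv e, Nat.card_congr e.toEquiv ▸ hcard, P.mapSurjective e.surjective,
    hP.map (e : A →* B) e.surjective⟩

theorem exists_isSchmidtPQ_of_injective {A B : Type*} [Group A] [Group B] [Finite A]
    [Fact p.Prime] {f : A →* B} (hf : Function.Injective f) {S : Subgroup A}
    (hS : IsSchmidtPQ p q S) : ∃ T : Subgroup B, IsSchmidtPQ p q T :=
  ⟨S.map f, hS.of_mulEquiv (S.equivMapOfInjective f hf)⟩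

theorem exists_isSchmidt_subgroup {X : Type*} [Group X] [Finite X] (hX : ¬ Group.IsNilpotent X) :
    ∃ S : Subgroup X, IsSchmidt S := by
  obtain ⟨S, hSnil, hSmin⟩ :=
    (Set.toFinite {S : Subgroup X | ¬ Group.IsNilpotent S}).exists_minimal
      ⟨⊤, fun h => hX (Group.nilpotent_of_mulEquiv Subgroup.topEquiv)⟩
  refine ⟨S, hSnil, fun T hT => ?_⟩
  have hlt : T.map S.subtype < S := by
    have := (map_subtype_lt_map_subtype (K := ⊤)).mpr (lt_top_iff_ne_top.mpr hT)
    rwa [← MonoidHom.range_eq_map, range_subtype] at this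
  have : Group.IsNilpotent (T.map S.subtype) := by
    by_contra h
    exact hlt.not_ge (hSmin h hlt.le)
  exact Group.nilpotent_of_mulEquiv (T.equivMapOfInjective _ S.subtype_injective).symm

theorem IsSchmidt.isSchmidtPQ {S Q : Type*} [Group S] [Group Q] [Finite S]
    [hp : Fact p.Prime] [hq : Fact q.Prime] (hS : IsSchmidt S) (ψ : S →* Q)
    (hker : IsPGroup p ψ.ker) (hrange : IsPGroup q ψ.range) : IsSchmidtPQ p q S := by
  have : Finite ψ.range := Finite.of_surjective _ ψ.rangeRestrict_surjective
  obtain ⟨a, ha⟩ := IsPGroup.iff_card.mp hker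
  obtain ⟨b, hb⟩ := IsPGroup.iff_card.mp hrange
  have hcard : Nat.card S = p ^ a * q ^ b := by
    rw [← ψ.ker.card_mul_index, index_ker ψ, ha, hb]
  have not_card_eq_prime_pow {r : ℕ} [Fact r.Prime] {k : ℕ} (h : Nat.card S = r ^ k) : False :=
    hS.1 (IsPGroup.of_card h).isNilpotent
  have ha0 : a ≠ 0 := by rintro rfl; exact not_card_eq_prime_pow (r := q) (by simpa using hcard)
  have hb0 : b ≠ 0 := by rintro rfl; exact not_card_eq_prime_pow (r := p) (by simpa using hcard)
  have hpq : p ≠ q := by rintro rfl; exact not_card_eq_prime_pow (pow_add p a b ▸ hcard)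
  have hindex : ¬ p ∣ ψ.ker.index := by
    rw [index_ker ψ, hb]
    exact fun h => hpq ((Nat.prime_dvd_prime_iff_eq hp.out hq.out).mp (hp.out.dvd_of_dvd_pow h))
  refine ⟨hS, ?_, hker.toSylow hindex, ψ.normal_ker⟩
  rw [hcard, Nat.primeFactors_mul (pow_ne_zero _ hp.out.ne_zero) (pow_ne_zero _ hq.out.ne_zero),
    Nat.primeFactors_prime_pow ha0 hp.out, Nat.primeFactors_prime_pow hb0 hq.out]
  rfl

theorem exists_isSchmidtPQ_of_not_isNilpotent {X Q : Type*} [Group X] [Group Q] [Finite X]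
    [Fact p.Prime] [Fact q.Prime] (hX : ¬ Group.IsNilpotent X) (ψ : X →* Q)
    (hker : IsPGroup p ψ.ker) (hrange : IsPGroup q ψ.range) :
    ∃ S : Subgroup X, IsSchmidtPQ p q S := by
  obtain ⟨S, hS⟩ := exists_isSchmidt_subgroup hX
  refine ⟨S, hS.isSchmidtPQ (ψ.comp S.subtype) ?_ (hrange.to_le ?_)⟩
  · rw [← MonoidHom.comap_ker]
    exact hker.comap_of_injective _ S.subtype_injective
  · rw [MonoidHom.range_comp, range_subtype]
    exact map_le_range ψ S

theorem exists_isSchmidtPQ_of_surjective {K H : Type*} [Group K] [Group H] [Finite K]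
    [Fact p.Prime] [Fact q.Prime] {f : K →* H} (hf : Function.Surjective f)
    (hH : IsSchmidtPQ p q H) : ∃ S : Subgroup K, IsSchmidtPQ p q S := by
  have : Finite H := Finite.of_surjective f hf
  obtain ⟨⟨hHnil, -⟩, hHcard, P, hPnormal⟩ := hH
  obtain ⟨Pk⟩ : Nonempty (Sylow p K) := inferInstance
  set M := normalizer ((Pk : Subgroup K) : Set K)
  set g : M →* H := f.comp M.subtype
  obtain ⟨Q⟩ : Nonempty (Sylow q M) := inferInstance
  have hgQ : (Q : Subgroup M).map g ⊔ P = ⊤ := by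
    have hτ : Function.Surjective ((QuotientGroup.mk' (P : Subgroup H)).comp g) := by
      rw [← MonoidHom.range_eq_top, MonoidHom.range_comp, QuotientGroup.map_mk'_eq_top_iff,
        MonoidHom.range_comp, range_subtype, Pk.map_normalizer_sup_eq_top hf P]
    rw [← QuotientGroup.map_mk'_eq_top_iff, map_map]
    exact Q.map_eq_top_of_isPGroup hτ (P.isPGroup_quotient_of_primeFactors_card_eq hHcard)
  set Pm := (Pk : Subgroup K).subgroupOf M
  set W := Pm ⊔ Q
  have hgPm : Pm.map g = P := by
    rw [← Pk.map_eq_of_normal hf P, ← map_map, subgroupOf_map_subtype,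
      inf_of_le_left le_normalizer]
  have hgW : W.map g = ⊤ := by
    rw [Subgroup.map_sup, hgPm, sup_comm, hgQ]
  have hWnil : ¬ Group.IsNilpotent W := fun hW =>
    hHnil (Group.nilpotent_of_surjective (g.comp W.subtype) (by
      rw [← MonoidHom.range_eq_top, MonoidHom.range_comp, range_subtype, hgW]))
  set ψ := (QuotientGroup.mk' Pm).comp W.subtype
  have hker : IsPGroup p ψ.ker := by
    rw [← MonoidHom.comap_ker, QuotientGroup.ker_mk']
    exact (Pk.2.comap_of_injective _ M.subtype_injective).comap_of_injective _ W.subtype_injective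
  have hrange : IsPGroup q ψ.range := by
    rw [MonoidHom.range_comp, range_subtype, Subgroup.map_sup, QuotientGroup.map_mk'_self,
      bot_sup_eq]
    exact Q.2.map _
  obtain ⟨S, hS⟩ := exists_isSchmidtPQ_of_not_isNilpotent hWnil ψ hker hrange
  exact exists_isSchmidtPQ_of_injective (f := M.subtype.comp W.subtype)
    (M.subtype_injective.comp W.subtype_injective) hS

end

theorem schmidt_Q_closed_general {G : Type*} [Group G] [Finite G] (N : Subgroup G) [N.Normal]
    {p q : ℕ} (hp : p.Prime) (hq : q.Prime)
    (h : ∃ H : Subgroup (G ⧸ N), IsSchmidtPQ p q H) :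
    ∃ H : Subgroup G, IsSchmidtPQ p q H := by
  have : Fact p.Prime := ⟨hp⟩
  have : Fact q.Prime := ⟨hq⟩
  obtain ⟨H, hH⟩ := h
  obtain ⟨S, hS⟩ := exists_isSchmidtPQ_of_surjective
    ((QuotientGroup.mk' N).subgroupComap_surjective_of_surjective H
      (QuotientGroup.mk'_surjective N)) hH
  exact exists_isSchmidtPQ_of_injective (H.comap (QuotientGroup.mk' N)).subtype_injective hS

/-- The Schmidt graph function is `Q`-closed: if `G/N` contains a Schmidt `(p,q)`-subgroup
then so does `G`. -/
theorem schmidt_Q_closed {G : Type*} [Group G] [Finite G] (N : Subgroup G) [N.Normal]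
    {p q : ℕ} (hp : p.Prime) (hq : q.Prime) (hpq : p ≠ q)
    (h : ∃ H : Subgroup (G ⧸ N), IsSchmidtPQ p q H) :
    ∃ H : Subgroup G, IsSchmidtPQ p q H :=
  schmidt_Q_closed_general N hp hq h
end

section
/- Let G₁ and G₂ be finite groups and p, q distinct primes. Then G₁ × G₂ contains a subgroup which is a Schmidt (p,q)-group if and only if G₁ contains such a subgroup or G₂ contains such a subgroup. (The Schmidt graph function is D₀-closed: Γ_Sch(G₁×G₂) = Γ_Sch(G₁) ∪ Γ_Sch(G₂).) -/
/-!
A subgroup `H ≤ G₁ × G₂` embeds in the product of its projections `π₁ H × π₂ H`, so if both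
projections were nilpotent then so would be `H`. Hence a Schmidt `(p,q)`-subgroup `H` has a
non-nilpotent projection, and a non-nilpotent epimorphic image of a Schmidt `(p,q)`-group is
again one: its proper subgroups are images of proper subgroups, its order divides `|H|`, and
it cannot miss `p` or `q` since a group of prime power order is nilpotent.
-/

theorem Group.isNilpotent_of_primeFactors_subset_singleton {G : Type*} [Group G] [Finite G]
    {r : ℕ} (hr : r.Prime) (h : (Nat.card G).primeFactors ⊆ {r}) : Group.IsNilpotent G := by
  have : Fact r.Prime := ⟨hr⟩
  have hcard : Nat.card G ≠ 0 := Nat.card_pos.ne'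
  refine (IsPGroup.iff_card.mpr ⟨_, Nat.eq_prime_pow_of_unique_prime_dvd hcard
    fun hd hdvd => Finset.mem_singleton.mp (h (Nat.mem_primeFactors.mpr ⟨hd, hdvd, hcard⟩))⟩)
    |>.isNilpotent

theorem Subgroup.isNilpotent_of_isNilpotent_map_fst_snd {A B : Type*} [Group A] [Group B]
    (H : Subgroup (A × B)) (h₁ : Group.IsNilpotent (H.map (MonoidHom.fst A B)))
    (h₂ : Group.IsNilpotent (H.map (MonoidHom.snd A B))) : Group.IsNilpotent H := by
  set K := (H.map (MonoidHom.fst A B)).prod (H.map (MonoidHom.snd A B))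
  have hle : H ≤ K := Subgroup.le_prod_iff.mpr ⟨le_rfl, le_rfl⟩
  have : Group.IsNilpotent K := Group.nilpotent_of_mulEquiv (Subgroup.prodEquiv _ _).symm
  exact Group.nilpotent_of_mulEquiv (Subgroup.subgroupOfEquivOfLe hle)

section

variable {G G' : Type*} [Group G] [Group G']

theorem IsSchmidt.of_surjective (h : IsSchmidt G) (f : G →* G') (hf : Function.Surjective f)
    (hG' : ¬ Group.IsNilpotent G') : IsSchmidt G' := by
  refine ⟨hG', fun K hK => ?_⟩
  have hproper : K.comap f ≠ ⊤ := fun htop =>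
    hK (Subgroup.comap_injective hf (htop.trans (Subgroup.comap_top f).symm))
  have := h.2 _ hproper
  rw [← Subgroup.map_comap_eq_self_of_surjective hf K]
  exact Group.nilpotent_of_surjective _ (f.subgroupMap_surjective _)

namespace IsSchmidtPQ

variable {p q : ℕ}

theorem prime_left (h : IsSchmidtPQ p q G) : p.Prime :=
  Nat.prime_of_mem_primeFactors (h.2.1 ▸ Finset.mem_insert_self p {q})

theorem prime_right (h : IsSchmidtPQ p q G) : q.Prime :=
  Nat.prime_of_mem_primeFactors (h.2.1 ▸ Finset.mem_insert_of_mem (Finset.mem_singleton_self q))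

theorem finite (h : IsSchmidtPQ p q G) : Finite G :=
  Nat.finite_of_card_ne_zero
    (Nat.mem_primeFactors.mp (h.2.1 ▸ Finset.mem_insert_self p {q})).2.2

theorem of_surjective (h : IsSchmidtPQ p q G) (f : G →* G') (hf : Function.Surjective f)
    (hG' : ¬ Group.IsNilpotent G') : IsSchmidtPQ p q G' := by
  have hp : Fact p.Prime := ⟨h.prime_left⟩
  have hq := h.prime_right
  have := h.finite
  have := Finite.of_surjective f hf
  obtain ⟨hSchmidt, hcard, P, hP⟩ := h
  have hsub : (Nat.card G').primeFactors ⊆ {p, q} :=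
    hcard ▸ Nat.primeFactors_mono (Subgroup.card_dvd_of_surjective f hf) Nat.card_pos.ne'
  refine ⟨hSchmidt.of_surjective f hf hG', ?_, P.mapSurjective hf, ?_⟩
  · refine hsub.antisymm
      (Finset.insert_subset_iff.mpr ⟨?_, Finset.singleton_subset_iff.mpr ?_⟩)
    · by_contra hp'
      exact hG' (Group.isNilpotent_of_primeFactors_subset_singleton hq
        ((Finset.subset_insert_iff_of_notMem hp').mp hsub))
    · by_contra hq'
      rw [Finset.pair_comm] at hsub
      exact hG' (Group.isNilpotent_of_primeFactors_subset_singleton hp.out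
        ((Finset.subset_insert_iff_of_notMem hq').mp hsub))
  · rw [Sylow.coe_mapSurjective]
    exact hP.map f hf

theorem of_mulEquiv_s8 (h : IsSchmidtPQ p q G) (e : G ≃* G') : IsSchmidtPQ p q G' :=
  h.of_surjective e.toMonoidHom e.surjective ((Group.isNilpotent_congr e).not.mp h.1.1)

theorem map {H : Subgroup G} (h : IsSchmidtPQ p q H) (f : G →* G')
    (hf : ¬ Group.IsNilpotent (H.map f)) : IsSchmidtPQ p q (H.map f) :=
  h.of_surjective (f.subgroupMap H) (f.subgroupMap_surjective H) hf

end IsSchmidtPQ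

end

theorem schmidt_D0_closed_general {G₁ G₂ : Type*} [Group G₁] [Group G₂] {p q : ℕ} :
    (∃ H : Subgroup (G₁ × G₂), IsSchmidtPQ p q H) ↔
      (∃ H : Subgroup G₁, IsSchmidtPQ p q H) ∨ (∃ H : Subgroup G₂, IsSchmidtPQ p q H) := by
  constructor
  · rintro ⟨H, hH⟩
    by_cases h₁ : Group.IsNilpotent (H.map (MonoidHom.fst G₁ G₂))
    · by_cases h₂ : Group.IsNilpotent (H.map (MonoidHom.snd G₁ G₂))
      · exact (hH.1.1 (H.isNilpotent_of_isNilpotent_map_fst_snd h₁ h₂)).elim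
      · exact Or.inr ⟨_, hH.map _ h₂⟩
    · exact Or.inl ⟨_, hH.map _ h₁⟩
  · rintro (⟨H, hH⟩ | ⟨H, hH⟩)
    · exact ⟨_, hH.of_mulEquiv_s8
        (H.equivMapOfInjective (MonoidHom.inl G₁ G₂) (Prod.mk_left_injective 1))⟩
    · exact ⟨_, hH.of_mulEquiv_s8
        (H.equivMapOfInjective (MonoidHom.inr G₁ G₂) (Prod.mk_right_injective 1))⟩

/-- The Schmidt graph function is `D₀`-closed: `G₁ × G₂` contains a Schmidt `(p,q)`-subgroup
iff `G₁` does or `G₂` does. -/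
theorem schmidt_D0_closed {G₁ G₂ : Type*} [Group G₁] [Group G₂] [Finite G₁] [Finite G₂]
    {p q : ℕ} (hp : p.Prime) (hq : q.Prime) (hpq : p ≠ q) :
    (∃ H : Subgroup (G₁ × G₂), IsSchmidtPQ p q H) ↔
      (∃ H : Subgroup G₁, IsSchmidtPQ p q H) ∨ (∃ H : Subgroup G₂, IsSchmidtPQ p q H) :=
  schmidt_D0_closed_general
end

section
/- Let G be a finite group, N a normal subgroup of G, P a Sylow p-subgroup of G, and q a prime with q ≠ p. If q divides the order of N_{G/N}(PN/N)/((PN/N)·C_{G/N}(PN/N)), then q divides the order of N_G(P)/(P·C_G(P)). (The Sylow graph function is Q-closed: Γ_s(G/N) ⊆ Γ_s(G).) -/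
/-- The Sylow graph function is `Q`-closed: let `N ⊴ G`, `P` a Sylow `p`-subgroup of `G` and
`q ≠ p` a prime. If `q` divides the order of
`N_{G/N}(PN/N) / ((PN/N)·C_{G/N}(PN/N))` then `q` divides the order of
`N_G(P)/(P·C_G(P))`. -/
theorem sylow_Q_closed {G : Type*} [Group G] [Finite G] (N : Subgroup G) [N.Normal]
    {p q : ℕ} (hp : p.Prime) (hq : q.Prime) (hpq : q ≠ p) (P : Sylow p G)
    (h : q ∣ ((P : Subgroup G).map (QuotientGroup.mk' N) ⊔
        Subgroup.centralizer (((P : Subgroup G).map (QuotientGroup.mk' N)) : Set (G ⧸ N))).relIndex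
        (Subgroup.normalizer (((P : Subgroup G).map (QuotientGroup.mk' N)) : Set (G ⧸ N)))) :
    q ∣ ((P : Subgroup G) ⊔ Subgroup.centralizer ((P : Subgroup G) : Set G)).relIndex
      (Subgroup.normalizer ((P : Subgroup G) : Set G)) := by
  have : Fact p.Prime := ⟨hp⟩
  set f := QuotientGroup.mk' N with hfdef
  have hf : Function.Surjective f := QuotientGroup.mk'_surjective N
  set Pb := (P : Subgroup G).map f with hPb
  set M := Subgroup.normalizer ((P : Subgroup G) : Set G) with hM
  -- key equality of normalizers
  have key : Subgroup.normalizer (Pb : Set (G ⧸ N)) = M.map f := by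
    apply le_antisymm
    · intro ybar hy
      obtain ⟨g, rfl⟩ := hf ybar
      set H := (P : Subgroup G) ⊔ N with hH
      have hg : g ∈ Subgroup.normalizer (H : Set G) := by
        have hcn := Subgroup.comap_normalizer_eq_of_surjective Pb hf
        rw [hPb, Subgroup.comap_map_eq, QuotientGroup.ker_mk'] at hcn
        rw [hH, ← hcn]
        exact hy
      have h1 : (P : Subgroup G) ≤ H := le_sup_left
      have h2 : ↑(g • P) ≤ H := by
        intro x hx
        rw [Sylow.coe_subgroup_smul, Subgroup.mem_pointwise_smul_iff_inv_smul_mem] at hx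
        have hx' : g⁻¹ * x * g ∈ (P : Subgroup G) := by
          simpa [mul_assoc] using hx
        exact (Subgroup.mem_normalizer_iff''.mp hg x).mpr (h1 hx')
      obtain ⟨hh, hhh⟩ := MulAction.exists_smul_eq H ((g • P).subtype h2) (P.subtype h1)
      simp_rw [Sylow.smul_subtype, Subgroup.smul_def, smul_smul] at hhh
      have hn : (↑hh * g : G) ∈ M :=
        Sylow.smul_eq_iff_mem_normalizer.mp (Sylow.subtype_injective hhh)
      have hexp : f g = f (↑hh : G)⁻¹ * f (↑hh * g) := by
        rw [← map_mul]; group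
      rw [hexp]
      have hHmap : H.map f ≤ M.map f := by
        rw [hH, Subgroup.map_sup]
        have hNbot : N.map f = ⊥ := by
          rw [Subgroup.map_eq_bot_iff, hfdef, QuotientGroup.ker_mk']
        rw [hNbot, sup_bot_eq]
        exact Subgroup.map_mono Subgroup.le_normalizer
      exact Subgroup.mul_mem _
        (hHmap (Subgroup.mem_map_of_mem f (H.inv_mem hh.2)))
        (Subgroup.mem_map_of_mem f hn)
    · exact Subgroup.le_normalizer_map f
  rw [key] at h
  set f' : M →* M.map f := f.subgroupMap M with hf'
  have hf's : Function.Surjective f' := f.subgroupMap_surjective M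
  set K := (P : Subgroup G) ⊔ Subgroup.centralizer ((P : Subgroup G) : Set G) with hK
  set Kb := Pb ⊔ Subgroup.centralizer (Pb : Set (G ⧸ N)) with hKb
  have hKmap : K.map f ≤ Kb := by
    rw [hK, Subgroup.map_sup, hKb]
    apply sup_le_sup le_rfl
    rintro _ ⟨c, hc, rfl⟩
    rw [Subgroup.mem_centralizer_iff]
    rintro _ ⟨x, hx, rfl⟩
    rw [← map_mul, ← map_mul, hc x hx]
  have hle : K.subgroupOf M ≤ Subgroup.comap f' (Kb.subgroupOf (M.map f)) := by
    intro x hx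
    rw [Subgroup.mem_comap, Subgroup.mem_subgroupOf]
    exact hKmap (Subgroup.mem_map_of_mem f hx)
  calc q ∣ (Kb.subgroupOf (M.map f)).index := h
    _ = (Subgroup.comap f' (Kb.subgroupOf (M.map f))).index :=
        ((Kb.subgroupOf (M.map f)).index_comap_of_surjective hf's).symm
    _ ∣ (K.subgroupOf M).index := Subgroup.index_dvd_of_le hle
end

section
/- Let G be a finite group and N₁, N₂ normal subgroups of G with N₁ ∩ N₂ = 1. Let p, q be distinct primes. Then the Sylow graph Γ_s(G) has the edge (p,q) if and only if Γ_s(G/N₁) has the edge (p,q) or Γ_s(G/N₂) has the edge (p,q). (The Sylow graph function is R₀-closed.) -/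
/-- `(p, q)` is an edge of the Sylow graph of `G`: `p ≠ q` and `q` divides the order of
`N_G(P)/(P·C_G(P))` for some Sylow `p`-subgroup `P` of `G`. -/
def SylowEdge (p q : ℕ) (G : Type*) [Group G] : Prop :=
  p ≠ q ∧ ∃ P : Sylow p G,
    q ∣ ((P : Subgroup G) ⊔ Subgroup.centralizer ((P : Subgroup G) : Set G)).relIndex
      (Subgroup.normalizer ((P : Subgroup G) : Set G))

open Subgroup

section

variable {G : Type*} [Group G]

theorem prime_dvd_orderOf_of_pow_prime_pow_eq_one {M : Type*} [Monoid M] {q n : ℕ}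
    (hq : q.Prime) {x : M} (hx : x ^ q ^ n = 1) (hx1 : x ≠ 1) : q ∣ orderOf x := by
  obtain ⟨i, -, hi⟩ := (Nat.dvd_prime_pow hq).1 (orderOf_dvd_of_pow_eq_one hx)
  have hi0 : i ≠ 0 := by
    rintro rfl
    exact hx1 (orderOf_eq_one_iff.1 (by rw [hi, pow_zero]))
  exact hi ▸ dvd_pow_self q hi0

theorem IsOfFinOrder.exists_pow_pow_prime_pow_eq_one {M : Type*} [Monoid M] {q : ℕ}
    (hq : q.Prime) {z : M} (hz : IsOfFinOrder z) : ∃ m n : ℕ, ¬ q ∣ m ∧ (z ^ m) ^ q ^ n = 1 :=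
  ⟨ordCompl[q] (orderOf z), (orderOf z).factorization q,
    Nat.not_dvd_ordCompl hq hz.orderOf_pos.ne', by
      rw [← pow_mul, mul_comm, Nat.ordProj_mul_ordCompl_eq_self, pow_orderOf_eq_one]⟩

theorem mem_centralizer_of_pow_eq_one_of_mem_sup_centralizer {p q n : ℕ} (hpq : p.Coprime q)
    {H : Subgroup G} (hH : IsPGroup p H) {y : G} (hy : y ^ q ^ n = 1)
    (hmem : y ∈ H ⊔ centralizer (H : Set G)) : y ∈ centralizer (H : Set G) := by
  rw [← SetLike.mem_coe, coe_mul_of_right_le_normalizer_left _ _ (centralizer_le_normalizer _)]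
    at hmem
  obtain ⟨a, ha, c, hc, rfl⟩ := hmem
  have hac : Commute a c := hc a ha
  have hpow : a ^ q ^ n ∈ centralizer (H : Set G) := by
    rw [eq_inv_of_mul_eq_one_left (hac.mul_pow (q ^ n) ▸ hy : a ^ q ^ n * c ^ q ^ n = 1)]
    exact inv_mem (pow_mem hc _)
  obtain ⟨k, hk⟩ := hH ⟨a, ha⟩
  have hcop : (q ^ n).Coprime (orderOf a) :=
    (hpq.symm.pow n k).coprime_dvd_right
      (orderOf_dvd_of_pow_eq_one (by simpa using congrArg Subtype.val hk))
  obtain ⟨u, hu⟩ := exists_pow_eq_self_of_coprime hcop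
  exact mul_mem (hu ▸ pow_mem hpow u) hc

instance normal_sup_centralizer_subgroupOf_normalizer (H : Subgroup G) :
    ((H ⊔ centralizer (H : Set G)).subgroupOf (normalizer (H : Set G))).Normal := by
  rw [subgroupOf_sup le_normalizer (centralizer_le_normalizer _)]
  infer_instance

theorem sylowEdge_iff_exists_pow_eq_one_not_mem_centralizer [Finite G] {p q : ℕ}
    (hq : q.Prime) (hpq : p.Coprime q) :
    SylowEdge p q G ↔ ∃ P : Sylow p G, ∃ y ∈ normalizer ((P : Subgroup G) : Set G),
      (∃ n : ℕ, y ^ q ^ n = 1) ∧ y ∉ centralizer ((P : Subgroup G) : Set G) := by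
  have : Fact q.Prime := ⟨hq⟩
  have hne : p ≠ q := by
    rintro rfl
    exact hq.ne_one ((Nat.coprime_self p).1 hpq)
  rw [SylowEdge, and_iff_right hne]
  refine exists_congr fun P => ?_
  rw [relIndex, index_eq_card]
  constructor
  · intro hdvd
    obtain ⟨x, hx⟩ := exists_prime_orderOf_dvd_card' q hdvd
    obtain ⟨z, rfl⟩ := QuotientGroup.mk_surjective x
    obtain ⟨m, n, hm, hzq⟩ := (isOfFinOrder_of_finite z).exists_pow_pow_prime_pow_eq_one hq
    refine ⟨z ^ m, pow_mem z.2 m, ⟨n, by simpa using congrArg Subtype.val hzq⟩, fun hC => hm ?_⟩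
    rw [← hx, orderOf_dvd_iff_pow_eq_one, ← QuotientGroup.mk_pow, QuotientGroup.eq_one_iff,
      mem_subgroupOf]
    exact mem_sup_right hC
  · rintro ⟨y, hyN, ⟨n, hy⟩, hyC⟩
    have hy1 : (QuotientGroup.mk ⟨y, hyN⟩ : normalizer ((P : Subgroup G) : Set G) ⧸
        (((P : Subgroup G) ⊔ centralizer ((P : Subgroup G) : Set G)).subgroupOf _)) ≠ 1 := by
      rw [Ne, QuotientGroup.eq_one_iff, mem_subgroupOf]
      exact fun h =>
        hyC (mem_centralizer_of_pow_eq_one_of_mem_sup_centralizer hpq P.isPGroup' hy h)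
    refine (prime_dvd_orderOf_of_pow_prime_pow_eq_one (n := n) hq ?_ hy1).trans
      (orderOf_dvd_natCard _)
    rw [← QuotientGroup.mk_pow, show (⟨y, hyN⟩ : normalizer _) ^ q ^ n = 1 from Subtype.ext hy,
      QuotientGroup.mk_one]

theorem Sylow.map_normalizer_eq [Finite G] {G' : Type*} [Group G'] {p : ℕ} [Fact p.Prime]
    {f : G →* G'} (hf : Function.Surjective f) (P : Sylow p G) :
    (normalizer ((P : Subgroup G) : Set G)).map f =
      normalizer (((P : Subgroup G).map f : Subgroup G') : Set G') := by
  refine le_antisymm (le_normalizer_map f) fun x hx => ?_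
  obtain ⟨w, rfl⟩ := hf x
  set H := ((P : Subgroup G).map f).comap f
  have hwP : ((w • P : Sylow p G) : Subgroup G) ≤ H := by
    intro y hy
    rw [Sylow.coe_subgroup_smul, mem_pointwise_smul_iff_inv_smul_mem, MulAut.smul_def,
      MulAut.conj_inv_apply] at hy
    rw [mem_comap, show f y = f w * f (w⁻¹ * y * w) * (f w)⁻¹ by simp [mul_assoc]]
    exact (mem_normalizer_iff.mp hx _).mp (mem_map_of_mem f hy)
  -- Sylow conjugacy inside `H = f⁻¹(f(P))` moves `w • P` back to `P`.
  obtain ⟨h, hh⟩ := MulAction.exists_smul_eq H ((w • P).subtype hwP) (P.subtype (le_comap_map f _))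
  simp_rw [Sylow.smul_subtype, Subgroup.smul_def, smul_smul] at hh
  have hhw : (h : G) * w ∈ normalizer ((P : Subgroup G) : Set G) :=
    Sylow.smul_eq_iff_mem_normalizer.mp (Sylow.subtype_injective hh)
  obtain ⟨a, haP, hfa⟩ := h.2
  exact ⟨a⁻¹ * (h * w), mul_mem (inv_mem (le_normalizer haP)) hhw, by simp [hfa]⟩

theorem mem_centralizer_of_mk_mem_centralizer {N₁ N₂ : Subgroup G} [N₁.Normal] [N₂.Normal]
    (hN : N₁ ⊓ N₂ = ⊥) {H : Subgroup G} {y : G}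
    (h₁ : (y : G ⧸ N₁) ∈ centralizer ((H.map (QuotientGroup.mk' N₁) : Subgroup (G ⧸ N₁)) : Set _))
    (h₂ : (y : G ⧸ N₂) ∈ centralizer ((H.map (QuotientGroup.mk' N₂) : Subgroup (G ⧸ N₂)) : Set _)) :
    y ∈ centralizer (H : Set G) := by
  have hinj : Function.Injective ((QuotientGroup.mk' N₁).prod (QuotientGroup.mk' N₂)) := by
    rw [← MonoidHom.ker_eq_bot_iff, MonoidHom.ker_prod, QuotientGroup.ker_mk',
      QuotientGroup.ker_mk', hN]
  exact fun a ha => Commute.of_map hinj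
    (Prod.ext (h₁ _ (mem_map_of_mem _ ha)) (h₂ _ (mem_map_of_mem _ ha)))

section

variable [Finite G] {G' : Type*} [Group G'] {p q : ℕ} [Fact p.Prime] {f : G →* G'}

theorem sylowEdge_of_map_not_mem_centralizer (hf : Function.Surjective f) (hq : q.Prime)
    (hpq : p.Coprime q) (P : Sylow p G) {y : G} (hyN : y ∈ normalizer ((P : Subgroup G) : Set G))
    {n : ℕ} (hy : y ^ q ^ n = 1)
    (hyC : f y ∉ centralizer (((P : Subgroup G).map f : Subgroup G') : Set G')) :
    SylowEdge p q G' := by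
  have : Finite G' := Finite.of_surjective f hf
  rw [sylowEdge_iff_exists_pow_eq_one_not_mem_centralizer hq hpq]
  exact ⟨P.mapSurjective hf, f y, le_normalizer_map f (mem_map_of_mem f hyN),
    ⟨n, by rw [← map_pow, hy, map_one]⟩, hyC⟩

theorem sylowEdge_of_surjective (hf : Function.Surjective f) (hq : q.Prime)
    (h : SylowEdge p q G') : SylowEdge p q G := by
  have : Finite G' := Finite.of_surjective f hf
  have hpq : p.Coprime q := (Nat.coprime_primes Fact.out hq).2 h.1
  rw [sylowEdge_iff_exists_pow_eq_one_not_mem_centralizer hq hpq] at h ⊢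
  obtain ⟨Q, x, hxN, ⟨n, hx⟩, hxC⟩ := h
  obtain ⟨P, rfl⟩ := Sylow.mapSurjective_surjective hf p Q
  rw [Sylow.coe_mapSurjective, ← Sylow.map_normalizer_eq hf] at hxN
  obtain ⟨z, hzN, rfl⟩ := hxN
  obtain ⟨m, k, hm, hzk⟩ := (isOfFinOrder_of_finite z).exists_pow_pow_prime_pow_eq_one hq
  refine ⟨P, z ^ m, pow_mem hzN m, ⟨k, hzk⟩, fun hC => hxC ?_⟩
  -- `f z` is a `q`-element, so it is a power of `f (z ^ m)`.
  have hcop : m.Coprime (orderOf (f z)) :=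
    (((hq.coprime_iff_not_dvd).2 hm).pow_left n).symm.coprime_dvd_right
      (orderOf_dvd_of_pow_eq_one hx)
  obtain ⟨u, hu⟩ := exists_pow_eq_self_of_coprime hcop
  rw [Sylow.coe_mapSurjective, ← hu, ← map_pow]
  exact pow_mem (map_centralizer_le_centralizer_image _ f (mem_map_of_mem f hC)) u

end

end

/-- The Sylow graph function is `R₀`-closed: if `N₁ ∩ N₂ = 1` then `(p,q)` is an edge of
`Γ_s(G)` iff it is an edge of `Γ_s(G/N₁)` or of `Γ_s(G/N₂)`. -/
theorem sylow_R0_closed {G : Type*} [Group G] [Finite G] (N₁ N₂ : Subgroup G)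
    [N₁.Normal] [N₂.Normal] (hN : N₁ ⊓ N₂ = ⊥)
    {p q : ℕ} (hp : p.Prime) (hq : q.Prime) (hpq : p ≠ q) :
    SylowEdge p q G ↔ SylowEdge p q (G ⧸ N₁) ∨ SylowEdge p q (G ⧸ N₂) := by
  have : Fact p.Prime := ⟨hp⟩
  have hcop : p.Coprime q := (Nat.coprime_primes hp hq).2 hpq
  have hs₁ := QuotientGroup.mk'_surjective N₁
  have hs₂ := QuotientGroup.mk'_surjective N₂
  refine ⟨fun h => ?_, fun h => h.elim (sylowEdge_of_surjective hs₁ hq)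
    (sylowEdge_of_surjective hs₂ hq)⟩
  obtain ⟨P, y, hyN, ⟨n, hy⟩, hyC⟩ :=
    (sylowEdge_iff_exists_pow_eq_one_not_mem_centralizer hq hcop).1 h
  by_contra hno
  refine hyC (mem_centralizer_of_mk_mem_centralizer hN ?_ ?_) <;> by_contra hC
  · exact hno (.inl (sylowEdge_of_map_not_mem_centralizer hs₁ hq hcop P hyN hy hC))
  · exact hno (.inr (sylowEdge_of_map_not_mem_centralizer hs₂ hq hcop P hyN hy hC))
end
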